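/- For every n ≥ 2 and every natural number α < n! - 1, there exist lists A and B of natural numbers such that A has length e(n,α), w(n,α) = List.reverse A ++ B, and w(n,α+1) = B ++ A. -/

import Mathlib

/-- The rank-to-permutation map of the cyclic-shift generation order. -/
def w : ℕ → ℕ → List ℕ
  | 0, _ => []
  | 1, _ => [0]
  | n + 2, α => List.rotate (w (n + 1) (α / (n + 2)) ++ [n + 1]) (α % (n + 2))

/-- The weight `e n α`: `k + 1` where `k` is the largest element of `{0, …, n-2}`
such that `ϖ(n,k)` divides `α + 1`. -/
def e (n α : ℕ) : ℕ :=
  Nat.findGreatest (fun k => Nat.descFactorial n k ∣ (α + 1)) (n - 2) + 1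

lemma w_length : ∀ n α, (w n α).length = n
  | 0, _ => rfl
  | 1, _ => rfl
  | n + 2, α => by
    simp [w, List.length_rotate, w_length (n + 1)]

lemma e_eq_one (m α : ℕ) (h : ¬ (m + 1) ∣ α + 1) : e (m + 1) α = 1 := by
  unfold e
  rw [Nat.findGreatest_eq_zero_iff.mpr]
  intro k hk hkn hP
  obtain ⟨j, rfl⟩ : ∃ j, k = j + 1 := ⟨k - 1, by omega⟩
  rw [Nat.succ_descFactorial_succ] at hP
  exact h ((Dvd.intro _ rfl).trans hP)

lemma e_succ (p α : ℕ) (h : (p + 3) ∣ α + 1) :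
    e (p + 3) α = e (p + 2) (α / (p + 3)) + 1 := by
  have hdiv : (α + 1) / (p + 3) = α / (p + 3) + 1 := by
    rw [Nat.succ_div, if_pos h]
  have key : ∀ k, ((p + 3).descFactorial (k + 1) ∣ α + 1) ↔
      ((p + 2).descFactorial k ∣ α / (p + 3) + 1) := by
    intro k
    rw [← hdiv, Nat.dvd_div_iff_mul_dvd h, Nat.succ_descFactorial_succ]
  unfold e
  simp only [show p + 3 - 2 = p + 1 from rfl, show p + 2 - 2 = p from rfl]
  set G := Nat.findGreatest (fun k => Nat.descFactorial (p + 3) k ∣ (α + 1)) (p + 1) with hG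
  set g := Nat.findGreatest
      (fun k => Nat.descFactorial (p + 2) k ∣ (α / (p + 3) + 1)) p with hg
  have hQg : Nat.descFactorial (p + 2) g ∣ α / (p + 3) + 1 :=
    Nat.findGreatest_spec (P := fun k => Nat.descFactorial (p + 2) k ∣ (α / (p + 3) + 1))
      (m := 0) (Nat.zero_le p) (by simp)
  have hle1 : g + 1 ≤ G := by
    apply Nat.le_findGreatest
    · have : g ≤ p := Nat.findGreatest_le p
      omega
    · exact (key g).mpr hQg
  have hle2 : G ≤ g + 1 := by
    have hPG : Nat.descFactorial (p + 3) G ∣ α + 1 :=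
      Nat.findGreatest_spec (P := fun k => Nat.descFactorial (p + 3) k ∣ (α + 1))
        (m := 1) (Nat.le_add_left 1 p) (by simpa using h)
    have hGpos : 0 < G := by omega
    obtain ⟨j, hj⟩ : ∃ j, G = j + 1 := ⟨G - 1, by omega⟩
    rw [hj] at hPG
    have : j ≤ g := Nat.le_findGreatest (by have : G ≤ p + 1 := Nat.findGreatest_le _; omega)
      ((key j).mp hPG)
    omega
  omega

theorem successive_permutations_overlap (n : ℕ) (hn : 2 ≤ n) (α : ℕ)
    (hα : α < n.factorial - 1) :
    ∃ A B : List ℕ, A.length = e n α ∧ w n α = A.reverse ++ B ∧ w n (α + 1) = B ++ A := by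
  induction n using Nat.strong_induction_on generalizing α with
  | _ n ih =>
  obtain ⟨m, rfl⟩ : ∃ m, n = m + 2 := ⟨n - 2, by omega⟩
  by_cases hcase : α % (m + 2) = m + 1
  · -- hard case: cyclic boundary
    obtain ⟨p, rfl⟩ : ∃ p, m = p + 1 := by
      rcases m with _ | p
      · exfalso
        have h1 : Nat.factorial 2 - 1 = 1 := rfl
        rw [h1] at hα
        interval_cases α
        · simp at hcase
      · exact ⟨p, rfl⟩
    have hα' : α < (p + 3).factorial - 1 := hα
    have hcase' : α % (p + 3) = p + 2 := hcase
    set β := α / (p + 3) with hβdef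
    have hdm : (p + 3) * β + α % (p + 3) = α := Nat.div_add_mod α (p + 3)
    have hα1 : α + 1 = (p + 3) * (β + 1) := by
      rw [Nat.mul_add, Nat.mul_one]
      omega
    have hdvd : (p + 3) ∣ α + 1 := ⟨β + 1, hα1⟩
    have hfact : Nat.factorial (p + 3) = (p + 3) * Nat.factorial (p + 2) := rfl
    have hβ : β < Nat.factorial (p + 2) - 1 := by
      have hpos : 0 < Nat.factorial (p + 3) := Nat.factorial_pos _
      have h2 : α + 1 < Nat.factorial (p + 3) := by omega
      rw [hα1, hfact] at h2
      have h3 := Nat.lt_of_mul_lt_mul_left h2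
      have hpos2 : 0 < Nat.factorial (p + 2) := Nat.factorial_pos _
      omega
    obtain ⟨A', B', hlen, h1, h2⟩ := ih (p + 2) (by omega) (by omega) β hβ
    have hdiv' : (α + 1) / (p + 3) = β + 1 := by
      rw [Nat.succ_div, if_pos hdvd]
    have h0 : (α + 1) % (p + 3) = 0 := Nat.mod_eq_zero_of_dvd hdvd
    refine ⟨A' ++ [p + 2], B', ?_, ?_, ?_⟩
    · rw [e_succ p α hdvd]
      simp [hlen]
      rfl
    · show List.rotate (w (p + 2) β ++ [p + 2]) (α % (p + 3)) = _
      rw [hcase', List.rotate_eq_drop_append_take (by simp [w_length]),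
        List.drop_left' (by simp [w_length]), List.take_left' (w_length _ _), h1]
      simp
    · show List.rotate (w (p + 2) ((α + 1) / (p + 3)) ++ [p + 2]) ((α + 1) % (p + 3)) = _
      rw [h0, hdiv', List.rotate_zero, h2]
      simp
  · -- easy case: rotate by one more
    have hr : α % (m + 2) < m + 1 := by
      have := Nat.mod_lt α (show 0 < m + 2 by omega)
      omega
    have hmod : (α + 1) % (m + 2) = α % (m + 2) + 1 := by
      rw [Nat.add_mod, Nat.mod_eq_of_lt (show 1 < m + 2 by omega),
        Nat.mod_eq_of_lt (by omega)]
    have hndvd : ¬ (m + 2) ∣ α + 1 := by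
      intro hd
      have h0 : (α + 1) % (m + 2) = 0 := Nat.mod_eq_zero_of_dvd hd
      omega
    have hdiv : (α + 1) / (m + 2) = α / (m + 2) := by
      rw [Nat.succ_div, if_neg hndvd, Nat.add_zero]
    obtain ⟨x, t, hxt⟩ : ∃ x t, w (m + 2) α = x :: t := by
      have hl : (w (m + 2) α).length = m + 2 := w_length _ _
      cases h : w (m + 2) α with
      | nil => rw [h] at hl; simp at hl
      | cons x t => exact ⟨x, t, rfl⟩
    refine ⟨[x], t, ?_, ?_, ?_⟩
    · rw [e_eq_one (m + 1) α hndvd]; rfl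
    · simpa using hxt
    · show List.rotate (w (m + 1) ((α + 1) / (m + 2)) ++ [m + 1]) ((α + 1) % (m + 2)) = _
      rw [hdiv, hmod, ← List.rotate_rotate]
      have hxt' : List.rotate (w (m + 1) (α / (m + 2)) ++ [m + 1]) (α % (m + 2)) = x :: t := hxt
      rw [hxt', List.rotate_cons_succ, List.rotate_zero]
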